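/- arXiv:2509.06583 — 3 statements merged into one kernel-verified Lean document; each statement's English description precedes it below -/
import Mathlib

section
/- Let N ∈ {2,3}, α = 4 − N, m₁, m₂ > 0, and ω ∈ ℝ with ω² < min{m₁², m₂²/4}. Let 𝛗 = (φ₁,φ₂) be an admissible pair, not identically zero, with P_ω(𝛗) = 0, and set 𝛙 = (iωφ₁, 2iωφ₂). Then the following three conditions are equivalent: (i) the second derivative at λ = 1 of the function λ ↦ λ^{−α}·K(𝛙) + λ^{α}·M(𝛗) − λ^{α+2}·L(𝛗) on (0,∞) is ≤ 0; (ii) (m₁² − (5−N)ω²)‖φ₁‖_{L²}² + (m₂² − 4(5−N)ω²)‖φ₂‖_{L²}² ≥ 0; (iii) α²·K(𝛙) ≤ (α+2)·L(𝛗). -/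
open MeasureTheory Complex

noncomputable section

/-- The spatial domain `ℝ^N`. -/
abbrev Sp (N : ℕ) := EuclideanSpace ℝ (Fin N)

/-- Square of the `L²` norm: `‖u‖_{L²}²`. -/
def nsq {N : ℕ} (u : Sp N → ℂ) : ℝ := ∫ x, ‖u x‖ ^ 2

/-- Square of the `L²` norm of the gradient: `‖∇u‖_{L²}²`. -/
def gsq {N : ℕ} (u : Sp N → ℂ) : ℝ := ∫ x, ‖fderiv ℝ u x‖ ^ 2

/-- An admissible pair: differentiable components, with `u_j`, `|∇u_j|`
square-integrable and `|u₁|²|u₂|` integrable. -/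
def Admissible {N : ℕ} (u : (Sp N → ℂ) × (Sp N → ℂ)) : Prop :=
  Differentiable ℝ u.1 ∧ Differentiable ℝ u.2 ∧
  MemLp u.1 2 volume ∧ MemLp u.2 2 volume ∧
  Integrable (fun x => ‖fderiv ℝ u.1 x‖ ^ 2) ∧
  Integrable (fun x => ‖fderiv ℝ u.2 x‖ ^ 2) ∧
  Integrable (fun x => ‖u.1 x‖ ^ 2 * ‖u.2 x‖)

/-- A pair of square-integrable functions. -/
def SqInt {N : ℕ} (v : (Sp N → ℂ) × (Sp N → ℂ)) : Prop :=
  MemLp v.1 2 volume ∧ MemLp v.2 2 volume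

/-- The interaction term `G(𝐮) = Re ∫ u₁² conj u₂`. -/
def Gfun {N : ℕ} (u : (Sp N → ℂ) × (Sp N → ℂ)) : ℝ :=
  (∫ x, (u.1 x) ^ 2 * starRingEnd ℂ (u.2 x)).re

/-- `L(𝐮) = -(1/2)(‖∇u₁‖² + ‖∇u₂‖²) + G(𝐮)`. -/
def Lfun {N : ℕ} (u : (Sp N → ℂ) × (Sp N → ℂ)) : ℝ :=
  -(1/2) * (gsq u.1 + gsq u.2) + Gfun u

/-- `M(𝐮) = (1/2)(m₁²‖u₁‖² + m₂²‖u₂‖²)`. -/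
def Mfun {N : ℕ} (m₁ m₂ : ℝ) (u : (Sp N → ℂ) × (Sp N → ℂ)) : ℝ :=
  (1/2) * (m₁ ^ 2 * nsq u.1 + m₂ ^ 2 * nsq u.2)

/-- `M_ω(𝐮) = ((m₁²-ω²)/2)‖u₁‖² + ((m₂²-4ω²)/2)‖u₂‖²`. -/
def Mom {N : ℕ} (m₁ m₂ ω : ℝ) (u : (Sp N → ℂ) × (Sp N → ℂ)) : ℝ :=
  (m₁ ^ 2 - ω ^ 2) / 2 * nsq u.1 + (m₂ ^ 2 - 4 * ω ^ 2) / 2 * nsq u.2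

/-- `J_ω(𝐮) = M_ω(𝐮) - L(𝐮)`. -/
def Jom {N : ℕ} (m₁ m₂ ω : ℝ) (u : (Sp N → ℂ) × (Sp N → ℂ)) : ℝ :=
  Mom m₁ m₂ ω u - Lfun u

/-- The Nehari functional `K_ω(𝐮)`. -/
def Kom {N : ℕ} (m₁ m₂ ω : ℝ) (u : (Sp N → ℂ) × (Sp N → ℂ)) : ℝ :=
  2 * Mom m₁ m₂ ω u + gsq u.1 + gsq u.2 - 3 * Gfun u

/-- `P_ω(𝐮) = α M_ω(𝐮) - (α+2) L(𝐮)` with `α = 4 - N`. -/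
def Pom {N : ℕ} (m₁ m₂ ω : ℝ) (u : (Sp N → ℂ) × (Sp N → ℂ)) : ℝ :=
  (4 - (N : ℝ)) * Mom m₁ m₂ ω u - ((4 - (N : ℝ)) + 2) * Lfun u

/-- `K(𝐯) = (1/2)(‖v₁‖² + ‖v₂‖²)`. -/
def Kfun {N : ℕ} (v : (Sp N → ℂ) × (Sp N → ℂ)) : ℝ :=
  (1/2) * (nsq v.1 + nsq v.2)

/-- The energy `E(𝐮,𝐯) = K(𝐯) + M(𝐮) - L(𝐮)`. -/
def Efun {N : ℕ} (m₁ m₂ : ℝ) (u v : (Sp N → ℂ) × (Sp N → ℂ)) : ℝ :=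
  Kfun v + Mfun m₁ m₂ u - Lfun u

/-- The charge `Q(𝐮,𝐯) = (v₁, i u₁)_{L²} + 2 (v₂, i u₂)_{L²}`. -/
def Qfun {N : ℕ} (u v : (Sp N → ℂ) × (Sp N → ℂ)) : ℝ :=
  (∫ x, v.1 x * starRingEnd ℂ (Complex.I * u.1 x)).re +
    2 * (∫ x, v.2 x * starRingEnd ℂ (Complex.I * u.2 x)).re

/-- `H(𝐮,𝐯) = -α K(𝐯) + α M(𝐮) - (α+2) L(𝐮)` with `α = 4 - N`. -/
def Hfun {N : ℕ} (m₁ m₂ : ℝ) (u v : (Sp N → ℂ) × (Sp N → ℂ)) : ℝ :=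
  -(4 - (N : ℝ)) * Kfun v + (4 - (N : ℝ)) * Mfun m₁ m₂ u - ((4 - (N : ℝ)) + 2) * Lfun u

/-- A ground-state pair: admissible, nonzero, `P_ω = 0`, and `J_ω` attains the
infimum of `J_ω` over nonzero admissible pairs on the Nehari manifold `K_ω = 0`. -/
def IsGroundState {N : ℕ} (m₁ m₂ ω : ℝ) (φ : (Sp N → ℂ) × (Sp N → ℂ)) : Prop :=
  Admissible φ ∧ φ ≠ 0 ∧ Pom m₁ m₂ ω φ = 0 ∧
  Jom m₁ m₂ ω φ =
    sInf {r : ℝ | ∃ w : (Sp N → ℂ) × (Sp N → ℂ),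
      Admissible w ∧ w ≠ 0 ∧ Kom m₁ m₂ ω w = 0 ∧ r = Jom m₁ m₂ ω w}

/-- `𝛙_ω = (iωφ₁, 2iωφ₂)`. -/
def psiOf {N : ℕ} (ω : ℝ) (φ : (Sp N → ℂ) × (Sp N → ℂ)) : (Sp N → ℂ) × (Sp N → ℂ) :=
  (fun x => Complex.I * (ω : ℂ) * φ.1 x, fun x => 2 * (Complex.I * (ω : ℂ)) * φ.2 x)

/-- The scaling `u^λ(x) = λ² u(λx)`, componentwise. -/
def uscale {N : ℕ} (lam : ℝ) (u : (Sp N → ℂ) × (Sp N → ℂ)) : (Sp N → ℂ) × (Sp N → ℂ) :=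
  (fun x => ((lam : ℂ)) ^ 2 * u.1 (lam • x), fun x => ((lam : ℂ)) ^ 2 * u.2 (lam • x))

/-- The scaling `v_λ(x) = λ^{N-2} v(λx)`, componentwise. -/
def vscale {N : ℕ} (lam : ℝ) (v : (Sp N → ℂ) × (Sp N → ℂ)) : (Sp N → ℂ) × (Sp N → ℂ) :=
  (fun x => ((lam ^ ((N : ℝ) - 2) : ℝ) : ℂ) * v.1 (lam • x),
   fun x => ((lam ^ ((N : ℝ) - 2) : ℝ) : ℂ) * v.2 (lam • x))



lemma nsq_aux {α : Type*} [MeasurableSpace α] (μ : Measure α) (c : ℂ) (u : α → ℂ) :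
    ∫ x, ‖c * u x‖ ^ 2 ∂μ = ‖c‖ ^ 2 * ∫ x, ‖u x‖ ^ 2 ∂μ := by
  simp_rw [norm_mul, mul_pow]
  exact integral_const_mul _ _

lemma deriv2_at_one (a b c p : ℝ) :
    deriv (deriv (fun lam : ℝ => lam ^ (-p) * a + lam ^ p * b - lam ^ (p + 2) * c)) 1
      = p * (p + 1) * a + p * (p - 1) * b - (p + 2) * (p + 1) * c := by
  set G : ℝ → ℝ := fun x => (-p * x ^ (-p - 1)) * a + (p * x ^ (p - 1)) * b
      - ((p + 2) * x ^ (p + 1)) * c with hG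
  have hF : ∀ x : ℝ, x ≠ 0 → HasDerivAt
      (fun lam : ℝ => lam ^ (-p) * a + lam ^ p * b - lam ^ (p + 2) * c) (G x) x := by
    intro x hx
    have h1 := (Real.hasDerivAt_rpow_const (p := -p) (Or.inl hx)).mul_const a
    have h2 := (Real.hasDerivAt_rpow_const (p := p) (Or.inl hx)).mul_const b
    have h3 := (Real.hasDerivAt_rpow_const (p := p + 2) (Or.inl hx)).mul_const c
    rw [show p + 2 - 1 = p + 1 by ring] at h3
    exact (h1.add h2).sub h3
  have hEq : deriv (fun lam : ℝ => lam ^ (-p) * a + lam ^ p * b - lam ^ (p + 2) * c)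
      =ᶠ[nhds (1 : ℝ)] G := by
    filter_upwards [isOpen_compl_singleton.mem_nhds (by simp : (1:ℝ) ∈ ({(0:ℝ)}ᶜ : Set ℝ))]
      with x hx using (hF x hx).deriv
  rw [hEq.deriv_eq]
  have h1 := ((Real.hasDerivAt_rpow_const (p := -p - 1) (Or.inl one_ne_zero)).const_mul
      (-p)).mul_const a
  have h2 := ((Real.hasDerivAt_rpow_const (p := p - 1) (Or.inl one_ne_zero)).const_mul
      p).mul_const b
  have h3 := ((Real.hasDerivAt_rpow_const (p := p + 1) (Or.inl one_ne_zero)).const_mul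
      (p + 2)).mul_const c
  have hG1 : HasDerivAt G
      ((-p * ((-p - 1) * (1:ℝ) ^ (-p - 1 - 1))) * a + (p * ((p - 1) * (1:ℝ) ^ (p - 1 - 1))) * b
        - ((p + 2) * ((p + 1) * (1:ℝ) ^ (p + 1 - 1))) * c) 1 := (h1.add h2).sub h3
  rw [hG1.deriv]
  simp [Real.one_rpow]
  ring

/-- Equivalence of the three conditions (i), (ii), (iii) for an admissible
nonzero pair `𝛗` with `P_ω(𝛗) = 0`, where `𝛙 = (iωφ₁, 2iωφ₂)`. -/
theorem stmt_1 {N : ℕ} (hN : N = 2 ∨ N = 3) (m₁ m₂ ω : ℝ)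
    (hm₁ : 0 < m₁) (hm₂ : 0 < m₂) (hω : ω ^ 2 < min (m₁ ^ 2) (m₂ ^ 2 / 4))
    (φ : (Sp N → ℂ) × (Sp N → ℂ)) (hadm : Admissible φ) (hne : φ ≠ 0)
    (hP : Pom m₁ m₂ ω φ = 0) :
    (deriv (deriv (fun lam : ℝ =>
        lam ^ (-(4 - (N : ℝ))) * Kfun (psiOf ω φ)
          + lam ^ (4 - (N : ℝ)) * Mfun m₁ m₂ φ
          - lam ^ ((4 - (N : ℝ)) + 2) * Lfun φ)) 1 ≤ 0
      ↔ (m₁ ^ 2 - (5 - (N : ℝ)) * ω ^ 2) * nsq φ.1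
          + (m₂ ^ 2 - 4 * (5 - (N : ℝ)) * ω ^ 2) * nsq φ.2 ≥ 0) ∧
    ((m₁ ^ 2 - (5 - (N : ℝ)) * ω ^ 2) * nsq φ.1
          + (m₂ ^ 2 - 4 * (5 - (N : ℝ)) * ω ^ 2) * nsq φ.2 ≥ 0
      ↔ (4 - (N : ℝ)) ^ 2 * Kfun (psiOf ω φ) ≤ ((4 - (N : ℝ)) + 2) * Lfun φ) := by
  have hdd := deriv2_at_one (Kfun (psiOf ω φ)) (Mfun m₁ m₂ φ) (Lfun φ) (4 - (N : ℝ))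
  have hK1 : nsq (psiOf ω φ).1 = ω ^ 2 * nsq φ.1 := by
    have h := nsq_aux (volume : Measure (Sp N)) (Complex.I * (ω : ℂ)) φ.1
    simp only [psiOf, nsq]
    rw [h]
    congr 1
    rw [norm_mul, Complex.norm_I, one_mul, Complex.norm_real, Real.norm_eq_abs, _root_.sq_abs]
  have hK2 : nsq (psiOf ω φ).2 = 4 * ω ^ 2 * nsq φ.2 := by
    have h := nsq_aux (volume : Measure (Sp N)) (2 * (Complex.I * (ω : ℂ))) φ.2
    simp only [psiOf, nsq]
    rw [h]
    congr 1
    rw [norm_mul, norm_mul, Complex.norm_I, Complex.norm_real, Real.norm_eq_abs, one_mul,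
      mul_pow, _root_.sq_abs]
    norm_num
  have hKf : Kfun (psiOf ω φ) = (1/2) * (ω ^ 2 * nsq φ.1 + 4 * ω ^ 2 * nsq φ.2) := by
    rw [Kfun, hK1, hK2]
  rw [hdd]
  simp only [Pom, Mom] at hP
  simp only [Mfun, hKf]
  rcases hN with h | h <;> subst h <;> norm_num at hP ⊢ <;>
    refine ⟨⟨fun h => by nlinarith, fun h => by nlinarith⟩,
      ⟨fun h => by nlinarith, fun h => by nlinarith⟩⟩

end
end

section
/- Let N ∈ {2,3}, α = 4 − N, m₁, m₂ > 0, and ω ∈ ℝ with ω² < min{m₁², m₂²/4}. Let 𝛗_ω = (φ₁,φ₂) be a ground-state pair and 𝛙_ω = (iωφ₁, 2iωφ₂), and assume (m₁² − (5−N)ω²)‖φ₁‖_{L²}² + (m₂² − 4(5−N)ω²)‖φ₂‖_{L²}² ≥ 0. Then for every λ > 1: E((𝛗_ω)^λ, (𝛙_ω)_λ) < E(𝛗_ω,𝛙_ω), Q((𝛗_ω)^λ, (𝛙_ω)_λ) = Q(𝛗_ω,𝛙_ω), H((𝛗_ω)^λ, (𝛙_ω)_λ) < 0, and P_ω((𝛗_ω)^λ)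 < 0. -/
open MeasureTheory Complex

noncomputable section

section AuxScaling

lemma comp_smul_real {N : ℕ} (f : Sp N → ℝ) (lam : ℝ) (h : 0 ≤ lam) :
    ∫ x : Sp N, f (lam • x) = (lam ^ N)⁻¹ * ∫ x, f x := by
  rw [Measure.integral_comp_smul_of_nonneg (μ := volume) f lam (hR := h),
    finrank_euclideanSpace_fin, smul_eq_mul]

lemma comp_smul_complex {N : ℕ} (f : Sp N → ℂ) (lam : ℝ) (h : 0 ≤ lam) :
    ∫ x : Sp N, f (lam • x) = (((lam ^ N)⁻¹ : ℝ) : ℂ) * ∫ x, f x := by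
  rw [Measure.integral_comp_smul_of_nonneg (μ := volume) f lam (hR := h),
    finrank_euclideanSpace_fin, real_smul]

lemma nsq_scale {N : ℕ} (u : Sp N → ℂ) (c : ℂ) (lam : ℝ) (h : 0 ≤ lam) :
    nsq (fun x => c * u (lam • x)) = ‖c‖ ^ 2 * ((lam ^ N)⁻¹ * nsq u) := by
  unfold nsq
  have h1 : (fun x : Sp N => ‖c * u (lam • x)‖ ^ 2)
      = fun x => ‖c‖ ^ 2 * ((fun y => ‖u y‖ ^ 2) (lam • x)) := by
    funext x; rw [norm_mul, mul_pow]
  rw [h1, integral_const_mul, comp_smul_real (fun y => ‖u y‖ ^ 2) lam h]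

lemma fderiv_scale {N : ℕ} (u : Sp N → ℂ) (hu : Differentiable ℝ u) (c : ℂ) (lam : ℝ)
    (x : Sp N) :
    fderiv ℝ (fun y => c * u (lam • y)) x = c • lam • fderiv ℝ u (lam • x) := by
  have hL : HasFDerivAt (fun y : Sp N => lam • y)
      (lam • ContinuousLinearMap.id ℝ (Sp N)) x := by
    exact (hasFDerivAt_id x).const_smul lam
  have h1 : HasFDerivAt (fun y : Sp N => u (lam • y))
      ((fderiv ℝ u (lam • x)).comp (lam • ContinuousLinearMap.id ℝ (Sp N))) x :=
    ((hu (lam • x)).hasFDerivAt).comp x hL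
  have h2 := h1.const_mul c
  rw [h2.fderiv]
  congr 1
  ext v
  simp

lemma gsq_scale {N : ℕ} (u : Sp N → ℂ) (hu : Differentiable ℝ u) (c : ℂ) (lam : ℝ)
    (h : 0 ≤ lam) :
    gsq (fun x => c * u (lam • x)) = ‖c‖ ^ 2 * lam ^ 2 * ((lam ^ N)⁻¹ * gsq u) := by
  unfold gsq
  have h1 : (fun x : Sp N => ‖fderiv ℝ (fun y => c * u (lam • y)) x‖ ^ 2)
      = fun x => ‖c‖ ^ 2 * lam ^ 2 * ((fun y => ‖fderiv ℝ u y‖ ^ 2) (lam • x)) := by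
    funext x
    rw [fderiv_scale u hu c lam x,
      norm_smul c (lam • fderiv ℝ u (lam • x)), norm_smul lam (fderiv ℝ u (lam • x))]
    simp only [Real.norm_eq_abs, _root_.abs_of_nonneg h]
    ring
  rw [h1, integral_const_mul, comp_smul_real (fun y => ‖fderiv ℝ u y‖ ^ 2) lam h]

lemma nsq_nonneg {N : ℕ} (u : Sp N → ℂ) : 0 ≤ nsq u :=
  integral_nonneg fun x => by positivity

lemma nsq_pos {N : ℕ} (u : Sp N → ℂ) (hc : Continuous u) (hm : MemLp u 2 volume)
    (hne : u ≠ 0) : 0 < nsq u := by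
  rcases lt_or_eq_of_le (nsq_nonneg u) with h | h
  · exact h
  exfalso
  have hint : Integrable (fun x => ‖u x‖ ^ 2) volume :=
    (memLp_two_iff_integrable_sq_norm hm.aestronglyMeasurable).mp hm
  have h0 : (fun x => ‖u x‖ ^ 2) =ᵐ[volume] 0 :=
    (integral_eq_zero_iff_of_nonneg (fun x => by positivity) hint).mp h.symm
  have h0' : u =ᵐ[volume] 0 := by
    filter_upwards [h0] with x hx
    have hx' : ‖u x‖ = 0 := by
      simp only [Pi.zero_apply] at hx ⊢
      nlinarith [norm_nonneg (u x)]
    simpa using hx'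
  exact hne (hc.ae_eq_iff_eq volume continuous_const |>.mp h0')

lemma re_int_scale {N : ℕ} (f : Sp N → ℂ) (r : ℝ) (lam : ℝ) (h : 0 ≤ lam) :
    (∫ x : Sp N, ((r : ℂ)) * f (lam • x)).re = r * ((lam ^ N)⁻¹ * (∫ x, f x).re) := by
  rw [integral_const_mul, comp_smul_complex f lam h, ← mul_assoc, ← ofReal_mul,
    re_ofReal_mul, mul_assoc]

lemma Gfun_scale {N : ℕ} (φ : (Sp N → ℂ) × (Sp N → ℂ)) (lam : ℝ) (h : 0 ≤ lam) :
    Gfun (uscale lam φ) = lam ^ 6 * ((lam ^ N)⁻¹ * Gfun φ) := by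
  unfold Gfun
  have h1 : ∀ x : Sp N, ((uscale lam φ).1 x) ^ 2 * starRingEnd ℂ ((uscale lam φ).2 x)
      = ((lam ^ 6 : ℝ) : ℂ) * ((fun y => (φ.1 y) ^ 2 * starRingEnd ℂ (φ.2 y)) (lam • x)) := by
    intro x
    simp only [uscale, map_mul, map_pow, conj_ofReal]
    push_cast
    ring
  simp only [h1]
  exact re_int_scale (fun y => (φ.1 y) ^ 2 * starRingEnd ℂ (φ.2 y)) (lam ^ 6) lam h

lemma Qfun_scale {N : ℕ} (φ ψ : (Sp N → ℂ) × (Sp N → ℂ)) (lam : ℝ) (h : 0 ≤ lam) :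
    Qfun (uscale lam φ) (vscale lam ψ)
      = (lam ^ ((N : ℝ) - 2) * lam ^ 2 * (lam ^ N)⁻¹) * Qfun φ ψ := by
  unfold Qfun
  have h1 : ∀ x : Sp N, (vscale lam ψ).1 x * starRingEnd ℂ (Complex.I * (uscale lam φ).1 x)
      = (((lam ^ ((N : ℝ) - 2) * lam ^ 2 : ℝ)) : ℂ)
        * ((fun y => ψ.1 y * starRingEnd ℂ (Complex.I * φ.1 y)) (lam • x)) := by
    intro x
    simp only [uscale, vscale, map_mul, map_pow, conj_ofReal]
    push_cast
    ring
  have h2 : ∀ x : Sp N, (vscale lam ψ).2 x * starRingEnd ℂ (Complex.I * (uscale lam φ).2 x)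
      = (((lam ^ ((N : ℝ) - 2) * lam ^ 2 : ℝ)) : ℂ)
        * ((fun y => ψ.2 y * starRingEnd ℂ (Complex.I * φ.2 y)) (lam • x)) := by
    intro x
    simp only [uscale, vscale, map_mul, map_pow, conj_ofReal]
    push_cast
    ring
  simp only [h1, h2]
  have e1 := re_int_scale (fun y => ψ.1 y * starRingEnd ℂ (Complex.I * φ.1 y))
    (lam ^ ((N : ℝ) - 2) * lam ^ 2) lam h
  have e2 := re_int_scale (fun y => ψ.2 y * starRingEnd ℂ (Complex.I * φ.2 y))
    (lam ^ ((N : ℝ) - 2) * lam ^ 2) lam h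
  rw [e1, e2]
  ring

end AuxScaling

set_option maxHeartbeats 2000000 in
/-- Under (SC2), for every `λ > 1`, the scaled pair
`((𝛗_ω)^λ, (𝛙_ω)_λ)` belongs to the blow-up set `𝓑_ω`. -/
theorem stmt_2 {N : ℕ} (hN : N = 2 ∨ N = 3) (m₁ m₂ ω : ℝ)
    (hm₁ : 0 < m₁) (hm₂ : 0 < m₂) (hω : ω ^ 2 < min (m₁ ^ 2) (m₂ ^ 2 / 4))
    (φ : (Sp N → ℂ) × (Sp N → ℂ)) (hφ : IsGroundState m₁ m₂ ω φ)
    (hSC : (m₁ ^ 2 - (5 - (N : ℝ)) * ω ^ 2) * nsq φ.1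
        + (m₂ ^ 2 - 4 * (5 - (N : ℝ)) * ω ^ 2) * nsq φ.2 ≥ 0) :
    ∀ lam : ℝ, 1 < lam →
      Efun m₁ m₂ (uscale lam φ) (vscale lam (psiOf ω φ)) < Efun m₁ m₂ φ (psiOf ω φ) ∧
      Qfun (uscale lam φ) (vscale lam (psiOf ω φ)) = Qfun φ (psiOf ω φ) ∧
      Hfun m₁ m₂ (uscale lam φ) (vscale lam (psiOf ω φ)) < 0 ∧
      Pom m₁ m₂ ω (uscale lam φ) < 0 := by
  obtain ⟨hadm, hne, hP, -⟩ := hφ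
  obtain ⟨hd1, hd2, hsq1, hsq2, -, -, -⟩ := hadm
  intro lam hlam
  have hl0 : (0:ℝ) < lam := lt_trans one_pos hlam
  have hl0' : (0:ℝ) ≤ lam := hl0.le
  have hω1 : ω ^ 2 < m₁ ^ 2 := lt_of_lt_of_le hω (min_le_left _ _)
  have hω2 : 4 * ω ^ 2 < m₂ ^ 2 := by
    have := lt_of_lt_of_le hω (min_le_right _ _); linarith
  have ha0 : 0 ≤ nsq φ.1 := nsq_nonneg _
  have hb0 : 0 ≤ nsq φ.2 := nsq_nonneg _
  have hMO0 : 0 < Mom m₁ m₂ ω φ := by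
    have hor : φ.1 ≠ 0 ∨ φ.2 ≠ 0 := by
      by_contra hcon
      push_neg at hcon
      exact hne (Prod.ext hcon.1 hcon.2)
    unfold Mom
    rcases hor with hn | hn
    · have h1 := nsq_pos φ.1 hd1.continuous hsq1 hn
      have t1 := mul_pos (show (0:ℝ) < (m₁^2 - ω^2)/2 by linarith only [hω1]) h1
      have t2 := mul_nonneg (show (0:ℝ) ≤ (m₂^2 - 4*ω^2)/2 by linarith only [hω2]) hb0
      linarith only [t1, t2]
    · have h2 := nsq_pos φ.2 hd2.continuous hsq2 hn
      have t1 := mul_nonneg (show (0:ℝ) ≤ (m₁^2 - ω^2)/2 by linarith only [hω1]) ha0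
      have t2 := mul_pos (show (0:ℝ) < (m₂^2 - 4*ω^2)/2 by linarith only [hω2]) h2
      linarith only [t1, t2]
  have hn2 : ‖(2:ℂ)‖ = 2 := by norm_num
  have hψ1 : nsq (psiOf ω φ).1 = ω ^ 2 * nsq φ.1 := by
    unfold nsq psiOf
    simp only
    rw [← integral_const_mul]
    congr 1
    funext x
    rw [norm_mul, norm_mul, Complex.norm_I, Complex.norm_real, Real.norm_eq_abs,
      one_mul, mul_pow, _root_.sq_abs]
  have hψ2 : nsq (psiOf ω φ).2 = 4 * ω ^ 2 * nsq φ.2 := by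
    unfold nsq psiOf
    simp only
    rw [← integral_const_mul]
    congr 1
    funext x
    rw [norm_mul, norm_mul, norm_mul, Complex.norm_I, Complex.norm_real,
      Real.norm_eq_abs, one_mul, hn2, mul_pow, mul_pow, _root_.sq_abs]
    norm_num
  unfold Pom at hP
  set MO := Mom m₁ m₂ ω φ with hMOdef
  set K := (1/2) * (ω^2 * nsq φ.1 + 4 * ω^2 * nsq φ.2) with hKdef
  have hK : 0 ≤ K := by
    rw [hKdef]
    have t1 := mul_nonneg (sq_nonneg ω) ha0
    have t2 := mul_nonneg (sq_nonneg ω) hb0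
    linarith only [t1, t2]
  have hK0 : Kfun (psiOf ω φ) = K := by
    unfold Kfun; rw [hψ1, hψ2, hKdef]
  have hM : Mfun m₁ m₂ φ = MO + K := by
    rw [hMOdef, hKdef]; unfold Mfun Mom; ring
  rcases hN with rfl | rfl
  · -- N = 2
    have hL : Lfun φ = MO / 2 := by
      norm_num at hP; linarith
    have hSC' : 2 * K ≤ MO := by
      rw [hKdef, hMOdef]; unfold Mom
      norm_num at hSC; nlinarith only [hSC, ha0, hb0]
    have hnc : ‖((lam:ℂ)) ^ 2‖ ^ 2 = lam ^ 4 := by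
      rw [norm_pow, Complex.norm_real, Real.norm_eq_abs, _root_.abs_of_nonneg hl0']; ring
    have h2p : (0:ℝ) < lam ^ 2 := by positivity
    have h21 : (1:ℝ) < lam ^ 2 := by nlinarith only [hlam]
    have eu1 : nsq (uscale lam φ).1 = lam ^ 2 * nsq φ.1 := by
      rw [show nsq (uscale lam φ).1 = nsq (fun x => ((lam:ℂ))^2 * φ.1 (lam • x)) from rfl,
        nsq_scale φ.1 ((lam:ℂ)^2) lam hl0', hnc]
      field_simp
    have eu2 : nsq (uscale lam φ).2 = lam ^ 2 * nsq φ.2 := by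
      rw [show nsq (uscale lam φ).2 = nsq (fun x => ((lam:ℂ))^2 * φ.2 (lam • x)) from rfl,
        nsq_scale φ.2 ((lam:ℂ)^2) lam hl0', hnc]
      field_simp
    have eg1 : gsq (uscale lam φ).1 = lam ^ 4 * gsq φ.1 := by
      rw [show gsq (uscale lam φ).1 = gsq (fun x => ((lam:ℂ))^2 * φ.1 (lam • x)) from rfl,
        gsq_scale φ.1 hd1 ((lam:ℂ)^2) lam hl0', hnc]
      field_simp
    have eg2 : gsq (uscale lam φ).2 = lam ^ 4 * gsq φ.2 := by
      rw [show gsq (uscale lam φ).2 = gsq (fun x => ((lam:ℂ))^2 * φ.2 (lam • x)) from rfl,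
        gsq_scale φ.2 hd2 ((lam:ℂ)^2) lam hl0', hnc]
      field_simp
    have eG : Gfun (uscale lam φ) = lam ^ 4 * Gfun φ := by
      rw [Gfun_scale φ lam hl0']
      field_simp
    have hrp : (lam ^ (((2:ℕ):ℝ) - 2) : ℝ) = 1 := by
      rw [show (((2:ℕ):ℝ) - 2) = 0 by norm_num, Real.rpow_zero]
    have ev1 : nsq (vscale lam (psiOf ω φ)).1 = (lam^2)⁻¹ * (ω^2 * nsq φ.1) := by
      rw [show nsq (vscale lam (psiOf ω φ)).1
          = nsq (fun x => ((lam ^ (((2:ℕ):ℝ) - 2) : ℝ) : ℂ) * (psiOf ω φ).1 (lam • x)) from rfl,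
        hrp, nsq_scale ((psiOf ω φ).1) (((1:ℝ):ℂ)) lam hl0', hψ1]
      norm_num
    have ev2 : nsq (vscale lam (psiOf ω φ)).2 = (lam^2)⁻¹ * (4 * ω^2 * nsq φ.2) := by
      rw [show nsq (vscale lam (psiOf ω φ)).2
          = nsq (fun x => ((lam ^ (((2:ℕ):ℝ) - 2) : ℝ) : ℂ) * (psiOf ω φ).2 (lam • x)) from rfl,
        hrp, nsq_scale ((psiOf ω φ).2) (((1:ℝ):ℂ)) lam hl0', hψ2]
      norm_num
    have hKv : Kfun (vscale lam (psiOf ω φ)) = (lam^2)⁻¹ * K := by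
      unfold Kfun; rw [ev1, ev2, hKdef]; ring
    have hMu : Mfun m₁ m₂ (uscale lam φ) = lam^2 * (MO + K) := by
      have h' : Mfun m₁ m₂ (uscale lam φ) = lam^2 * Mfun m₁ m₂ φ := by
        unfold Mfun; rw [eu1, eu2]; ring
      rw [h', hM]
    have hLu : Lfun (uscale lam φ) = lam^4 * (MO/2) := by
      have h' : Lfun (uscale lam φ) = lam^4 * Lfun φ := by
        unfold Lfun; rw [eg1, eg2, eG]; ring
      rw [h', hL]
    have hMomu : Mom m₁ m₂ ω (uscale lam φ) = lam^2 * MO := by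
      rw [hMOdef]; unfold Mom; rw [eu1, eu2]; ring
    refine ⟨?_, ?_, ?_, ?_⟩
    · have hEs : Efun m₁ m₂ (uscale lam φ) (vscale lam (psiOf ω φ))
          = (lam^2)⁻¹ * K + lam^2 * (MO + K) - lam^4 * (MO/2) := by
        unfold Efun; rw [hKv, hMu, hLu]
      have hE0 : Efun m₁ m₂ φ (psiOf ω φ) = K + (MO + K) - MO/2 := by
        unfold Efun; rw [hK0, hM, hL]
      rw [hEs, hE0]
      have key : ((lam^2)⁻¹ * K + lam^2 * (MO + K) - lam^4 * (MO/2)) - (K + (MO + K) - MO/2)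
          = ((lam^2 - 1)^2 * (2*K - MO*lam^2)) / (2*lam^2) := by
        field_simp; ring
      have hnum : (lam^2 - 1)^2 * (2*K - MO*lam^2) < 0 := by
        apply mul_neg_of_pos_of_neg
        · have h3 : 0 < lam^2 - 1 := by linarith only [h21]
          positivity
        · have hm := mul_pos hMO0 (show (0:ℝ) < lam^2 - 1 by linarith only [h21])
          linarith only [hSC', hm]
      have hdiv : ((lam^2 - 1)^2 * (2*K - MO*lam^2)) / (2*lam^2) < 0 :=
        div_neg_of_neg_of_pos hnum (by positivity)
      linarith only [key, hdiv]
    · rw [Qfun_scale φ (psiOf ω φ) lam hl0', hrp, one_mul,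
        mul_inv_cancel₀ (ne_of_gt h2p), one_mul]
    · have hHs : Hfun m₁ m₂ (uscale lam φ) (vscale lam (psiOf ω φ))
          = -(4 - ((2:ℕ):ℝ)) * ((lam^2)⁻¹ * K) + (4 - ((2:ℕ):ℝ)) * (lam^2 * (MO + K))
            - ((4 - ((2:ℕ):ℝ)) + 2) * (lam^4 * (MO/2)) := by
        unfold Hfun; rw [hKv, hMu, hLu]
      rw [hHs]
      push_cast
      have key : (-(4 - (2:ℝ)) * ((lam^2)⁻¹ * K) + (4 - (2:ℝ)) * (lam^2 * (MO + K))
            - ((4 - (2:ℝ)) + 2) * (lam^4 * (MO/2))) * (lam^2)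
          = 2 * (K * (lam^4 - 1) - MO * lam^4 * (lam^2 - 1)) := by
        field_simp; ring
      have hnum : K * (lam^4 - 1) - MO * lam^4 * (lam^2 - 1) < 0 := by
        have h3 : (0:ℝ) < lam^2 - 1 := by linarith only [h21]
        have hq : 0 < MO * ((lam^2 - 1)^2 * (2*lam^2 + 1)) :=
          mul_pos hMO0 (mul_pos (pow_pos h3 2) (by linarith only [h2p]))
        have h4 : (0:ℝ) ≤ lam^4 - 1 := by nlinarith only [h21, h2p]
        have hKb : K * (lam^4 - 1) ≤ MO/2 * (lam^4 - 1) :=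
          mul_le_mul_of_nonneg_right (by linarith only [hSC']) h4
        linarith only [hq, hKb]
      nlinarith only [key, hnum, h2p]
    · have hPs : Pom m₁ m₂ ω (uscale lam φ)
          = (4 - ((2:ℕ):ℝ)) * (lam^2 * MO) - ((4 - ((2:ℕ):ℝ)) + 2) * (lam^4 * (MO/2)) := by
        unfold Pom; rw [hMomu, hLu]
      rw [hPs]
      push_cast
      have hm := mul_pos (mul_pos hMO0 h2p) (show (0:ℝ) < lam^2 - 1 by linarith only [h21])
      linarith only [hm]
  · -- N = 3
    have hL : Lfun φ = MO / 3 := by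
      norm_num at hP; linarith
    have hSC' : K ≤ MO := by
      rw [hKdef, hMOdef]; unfold Mom
      norm_num at hSC; nlinarith only [hSC, ha0, hb0]
    have hnc : ‖((lam:ℂ)) ^ 2‖ ^ 2 = lam ^ 4 := by
      rw [norm_pow, Complex.norm_real, Real.norm_eq_abs, _root_.abs_of_nonneg hl0']; ring
    have h2p : (0:ℝ) < lam ^ 2 := by positivity
    have h21 : (1:ℝ) < lam ^ 2 := by nlinarith
    have eu1 : nsq (uscale lam φ).1 = lam * nsq φ.1 := by
      rw [show nsq (uscale lam φ).1 = nsq (fun x => ((lam:ℂ))^2 * φ.1 (lam • x)) from rfl,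
        nsq_scale φ.1 ((lam:ℂ)^2) lam hl0', hnc]
      field_simp
    have eu2 : nsq (uscale lam φ).2 = lam * nsq φ.2 := by
      rw [show nsq (uscale lam φ).2 = nsq (fun x => ((lam:ℂ))^2 * φ.2 (lam • x)) from rfl,
        nsq_scale φ.2 ((lam:ℂ)^2) lam hl0', hnc]
      field_simp
    have eg1 : gsq (uscale lam φ).1 = lam ^ 3 * gsq φ.1 := by
      rw [show gsq (uscale lam φ).1 = gsq (fun x => ((lam:ℂ))^2 * φ.1 (lam • x)) from rfl,
        gsq_scale φ.1 hd1 ((lam:ℂ)^2) lam hl0', hnc]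
      field_simp
    have eg2 : gsq (uscale lam φ).2 = lam ^ 3 * gsq φ.2 := by
      rw [show gsq (uscale lam φ).2 = gsq (fun x => ((lam:ℂ))^2 * φ.2 (lam • x)) from rfl,
        gsq_scale φ.2 hd2 ((lam:ℂ)^2) lam hl0', hnc]
      field_simp
    have eG : Gfun (uscale lam φ) = lam ^ 3 * Gfun φ := by
      rw [Gfun_scale φ lam hl0']
      field_simp
    have hrp : (lam ^ (((3:ℕ):ℝ) - 2) : ℝ) = lam := by
      rw [show (((3:ℕ):ℝ) - 2) = 1 by norm_num, Real.rpow_one]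
    have hncl : ‖((lam:ℝ):ℂ)‖ ^ 2 = lam ^ 2 := by
      rw [Complex.norm_real, Real.norm_eq_abs, _root_.abs_of_nonneg hl0']
    have ev1 : nsq (vscale lam (psiOf ω φ)).1 = lam⁻¹ * (ω^2 * nsq φ.1) := by
      rw [show nsq (vscale lam (psiOf ω φ)).1
          = nsq (fun x => ((lam ^ (((3:ℕ):ℝ) - 2) : ℝ) : ℂ) * (psiOf ω φ).1 (lam • x)) from rfl,
        hrp, nsq_scale ((psiOf ω φ).1) (((lam:ℝ):ℂ)) lam hl0', hψ1, hncl]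
      field_simp
    have ev2 : nsq (vscale lam (psiOf ω φ)).2 = lam⁻¹ * (4 * ω^2 * nsq φ.2) := by
      rw [show nsq (vscale lam (psiOf ω φ)).2
          = nsq (fun x => ((lam ^ (((3:ℕ):ℝ) - 2) : ℝ) : ℂ) * (psiOf ω φ).2 (lam • x)) from rfl,
        hrp, nsq_scale ((psiOf ω φ).2) (((lam:ℝ):ℂ)) lam hl0', hψ2, hncl]
      field_simp
    have hKv : Kfun (vscale lam (psiOf ω φ)) = lam⁻¹ * K := by
      unfold Kfun; rw [ev1, ev2, hKdef]; ring
    have hMu : Mfun m₁ m₂ (uscale lam φ) = lam * (MO + K) := by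
      have h' : Mfun m₁ m₂ (uscale lam φ) = lam * Mfun m₁ m₂ φ := by
        unfold Mfun; rw [eu1, eu2]; ring
      rw [h', hM]
    have hLu : Lfun (uscale lam φ) = lam^3 * (MO/3) := by
      have h' : Lfun (uscale lam φ) = lam^3 * Lfun φ := by
        unfold Lfun; rw [eg1, eg2, eG]; ring
      rw [h', hL]
    have hMomu : Mom m₁ m₂ ω (uscale lam φ) = lam * MO := by
      rw [hMOdef]; unfold Mom; rw [eu1, eu2]; ring
    refine ⟨?_, ?_, ?_, ?_⟩
    · have hEs : Efun m₁ m₂ (uscale lam φ) (vscale lam (psiOf ω φ))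
          = lam⁻¹ * K + lam * (MO + K) - lam^3 * (MO/3) := by
        unfold Efun; rw [hKv, hMu, hLu]
      have hE0 : Efun m₁ m₂ φ (psiOf ω φ) = K + (MO + K) - MO/3 := by
        unfold Efun; rw [hK0, hM, hL]
      rw [hEs, hE0]
      have key : (lam⁻¹ * K + lam * (MO + K) - lam^3 * (MO/3)) - (K + (MO + K) - MO/3)
          = ((lam - 1)^2 * (3*K - MO * lam * (lam + 2))) / (3*lam) := by
        field_simp; ring
      have hnum : (lam - 1)^2 * (3*K - MO * lam * (lam + 2)) < 0 := by
        apply mul_neg_of_pos_of_neg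
        · have h3 : 0 < lam - 1 := by linarith only [hlam]
          positivity
        · have hm := mul_pos hMO0 (mul_pos (show (0:ℝ) < lam - 1 by linarith only [hlam])
            (show (0:ℝ) < lam + 3 by linarith only [hl0]))
          linarith only [hSC', hm]
      have hdiv : ((lam - 1)^2 * (3*K - MO * lam * (lam + 2))) / (3*lam) < 0 :=
        div_neg_of_neg_of_pos hnum (by positivity)
      linarith only [key, hdiv]
    · rw [Qfun_scale φ (psiOf ω φ) lam hl0', hrp]
      have : lam * lam ^ 2 * (lam ^ 3)⁻¹ = 1 := by
        field_simp
      rw [this, one_mul]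
    · have hHs : Hfun m₁ m₂ (uscale lam φ) (vscale lam (psiOf ω φ))
          = -(4 - ((3:ℕ):ℝ)) * (lam⁻¹ * K) + (4 - ((3:ℕ):ℝ)) * (lam * (MO + K))
            - ((4 - ((3:ℕ):ℝ)) + 2) * (lam^3 * (MO/3)) := by
        unfold Hfun; rw [hKv, hMu, hLu]
      rw [hHs]
      push_cast
      have key : (-(4 - (3:ℝ)) * (lam⁻¹ * K) + (4 - (3:ℝ)) * (lam * (MO + K))
            - ((4 - (3:ℝ)) + 2) * (lam^3 * (MO/3))) * lam
          = (lam^2 - 1) * (K - MO * lam^2) := by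
        field_simp; ring
      have hnum : (lam^2 - 1) * (K - MO * lam^2) < 0 := by
        apply mul_neg_of_pos_of_neg
        · linarith only [h21]
        · have hm := mul_pos hMO0 (show (0:ℝ) < lam^2 - 1 by linarith only [h21])
          linarith only [hSC', hm]
      nlinarith only [key, hnum, hl0]
    · have hPs : Pom m₁ m₂ ω (uscale lam φ)
          = (4 - ((3:ℕ):ℝ)) * (lam * MO) - ((4 - ((3:ℕ):ℝ)) + 2) * (lam^3 * (MO/3)) := by
        unfold Pom; rw [hMomu, hLu]
      rw [hPs]
      push_cast
      have hm := mul_pos (mul_pos hMO0 hl0) (show (0:ℝ) < lam^2 - 1 by linarith only [h21])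
      linarith only [hm]

end
end

section
/- Let N ∈ {2,3}, α = 4 − N, m₁, m₂ > 0, and ω ∈ ℝ with ω² < min{m₁², m₂²/4}. Let 𝛗_ω be a ground-state pair. If 𝐮 is an admissible pair with P_ω(𝐮) < 0, then M_ω(𝛗_ω) < M_ω(𝐮) and L(𝛗_ω) < L(𝐮). -/
open MeasureTheory Complex

noncomputable section

namespace Stmt7Aux

variable {N : ℕ}

lemma int_smul (f : Sp N → ℝ) {l : ℝ} (hl : 0 < l) :
    ∫ x, f (l • x) = (l ^ N)⁻¹ * ∫ x, f x := by
  rw [MeasureTheory.Measure.integral_comp_smul_of_nonneg volume f l (hR := hl.le)]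
  simp [finrank_euclideanSpace_fin, smul_eq_mul]

lemma fderiv_sc (g : Sp N → ℂ) (hg : Differentiable ℝ g) (l : ℝ) (c : ℂ) (x : Sp N) :
    fderiv ℝ (fun x => c * g (l • x)) x = c • (l • fderiv ℝ g (l • x)) := by
  have hsm : DifferentiableAt ℝ (fun x : Sp N => l • x) x := by
    exact (differentiable_id.const_smul l) x
  have hd : Differentiable ℝ (fun x : Sp N => g (l • x)) :=
    hg.comp (differentiable_id.const_smul l)
  rw [fderiv_const_mul (hd x) c]
  congr 1
  have h1 : (fun x : Sp N => g (l • x)) = g ∘ (fun x : Sp N => l • x) := rfl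
  rw [h1, fderiv_comp x (hg _) hsm]
  have h2 : fderiv ℝ (fun x : Sp N => l • x) x = l • ContinuousLinearMap.id ℝ (Sp N) := by
    have h3 : (fun x : Sp N => l • x) = fun x => l • (id x) := rfl
    rw [h3, fderiv_fun_const_smul differentiable_id.differentiableAt l, fderiv_id]
  rw [h2]
  ext y
  simp [_root_.map_smul]

lemma norm_coeff {l : ℝ} (hl : 0 < l) : ‖((l : ℂ)) ^ 2‖ = l ^ 2 := by
  rw [norm_pow, Complex.norm_real, Real.norm_eq_abs, abs_of_pos hl]

lemma norm_sq_sc (f : Sp N → ℂ) {l : ℝ} (hl : 0 < l) :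
    (fun x : Sp N => ‖((l : ℂ)) ^ 2 * f (l • x)‖ ^ 2)
      = fun x => l ^ 4 * ((fun y => ‖f y‖ ^ 2) (l • x)) := by
  funext x
  rw [norm_mul, norm_coeff hl, mul_pow]
  ring

lemma nsq_sc (f : Sp N → ℂ) {l : ℝ} (hl : 0 < l) :
    nsq (fun x : Sp N => ((l : ℂ)) ^ 2 * f (l • x)) = l ^ 4 * ((l ^ N)⁻¹ * nsq f) := by
  rw [nsq, norm_sq_sc f hl, MeasureTheory.integral_const_mul,
    int_smul (fun y => ‖f y‖ ^ 2) hl]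
  rfl

lemma norm_fderiv_sq_sc (f : Sp N → ℂ) (hf : Differentiable ℝ f) {l : ℝ} (hl : 0 < l) :
    (fun x : Sp N => ‖fderiv ℝ (fun x => ((l : ℂ)) ^ 2 * f (l • x)) x‖ ^ 2)
      = fun x => l ^ 6 * ((fun y => ‖fderiv ℝ f y‖ ^ 2) (l • x)) := by
  funext x
  rw [fderiv_sc f hf l _ x, norm_smul (((l : ℂ)) ^ 2) (l • fderiv ℝ f (l • x)),
    norm_smul l (fderiv ℝ f (l • x)), norm_coeff hl]
  simp only [Real.norm_eq_abs, abs_of_pos hl]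
  ring

lemma gsq_sc (f : Sp N → ℂ) (hf : Differentiable ℝ f) {l : ℝ} (hl : 0 < l) :
    gsq (fun x : Sp N => ((l : ℂ)) ^ 2 * f (l • x)) = l ^ 6 * ((l ^ N)⁻¹ * gsq f) := by
  rw [gsq, norm_fderiv_sq_sc f hf hl, MeasureTheory.integral_const_mul,
    int_smul (fun y => ‖fderiv ℝ f y‖ ^ 2) hl]
  rfl

lemma G_sc (u : (Sp N → ℂ) × (Sp N → ℂ)) {l : ℝ} (hl : 0 < l) :
    Gfun (uscale l u) = l ^ 6 * ((l ^ N)⁻¹ * Gfun u) := by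
  have h : (fun x : Sp N => ((uscale l u).1 x) ^ 2 * (starRingEnd ℂ) ((uscale l u).2 x))
      = fun x => ((l ^ 6 : ℝ) : ℂ) * ((fun y => (u.1 y) ^ 2 * (starRingEnd ℂ) (u.2 y)) (l • x)) := by
    funext x
    simp only [uscale, map_mul, map_pow, Complex.conj_ofReal]
    push_cast
    ring
  have hI := MeasureTheory.Measure.integral_comp_smul_of_nonneg (μ := volume)
    (fun y : Sp N => (u.1 y) ^ 2 * (starRingEnd ℂ) (u.2 y)) l (hR := hl.le)
  rw [finrank_euclideanSpace_fin] at hI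
  rw [Gfun, h, MeasureTheory.integral_const_mul, hI, Complex.real_smul]
  rw [show ((l ^ 6 : ℝ) : ℂ) * (((l ^ N)⁻¹ : ℝ) * ∫ x, (u.1 x) ^ 2 * (starRingEnd ℂ) (u.2 x))
      = ((l ^ 6 * (l ^ N)⁻¹ : ℝ) : ℂ) * ∫ x, (u.1 x) ^ 2 * (starRingEnd ℂ) (u.2 x) by
    push_cast; ring]
  rw [Complex.re_ofReal_mul, Gfun]
  ring

lemma diff_sc (f : Sp N → ℂ) (hf : Differentiable ℝ f) (l : ℝ) :
    Differentiable ℝ (fun x : Sp N => ((l : ℂ)) ^ 2 * f (l • x)) :=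
  (hf.comp (differentiable_id.const_smul l)).const_mul _

lemma mem_sc (f : Sp N → ℂ) (hf : Differentiable ℝ f) (hf2 : MemLp f 2 volume) {l : ℝ}
    (hl : 0 < l) : MemLp (fun x : Sp N => ((l : ℂ)) ^ 2 * f (l • x)) 2 volume := by
  rw [memLp_two_iff_integrable_sq_norm ((diff_sc f hf l).continuous.aestronglyMeasurable)]
  have hi : Integrable (fun y => ‖f y‖ ^ 2) volume :=
    (memLp_two_iff_integrable_sq_norm hf.continuous.aestronglyMeasurable).1 hf2
  have h2 := (hi.comp_smul (R := l) hl.ne').const_mul (l ^ 4)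
  rw [norm_sq_sc f hl]
  exact h2

lemma adm_sc (u : (Sp N → ℂ) × (Sp N → ℂ)) (hu : Admissible u) {l : ℝ} (hl : 0 < l) :
    Admissible (uscale l u) := by
  obtain ⟨hd1, hd2, hm1, hm2, hi1, hi2, hi3⟩ := hu
  refine ⟨diff_sc _ hd1 l, diff_sc _ hd2 l, mem_sc _ hd1 hm1 hl, mem_sc _ hd2 hm2 hl, ?_, ?_, ?_⟩
  · have h2 := (hi1.comp_smul (R := l) hl.ne').const_mul (l ^ 6)
    show Integrable (fun x : Sp N =>
      ‖fderiv ℝ (fun x => ((l : ℂ)) ^ 2 * u.1 (l • x)) x‖ ^ 2) volume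
    rw [norm_fderiv_sq_sc u.1 hd1 hl]
    exact h2
  · have h2 := (hi2.comp_smul (R := l) hl.ne').const_mul (l ^ 6)
    show Integrable (fun x : Sp N =>
      ‖fderiv ℝ (fun x => ((l : ℂ)) ^ 2 * u.2 (l • x)) x‖ ^ 2) volume
    rw [norm_fderiv_sq_sc u.2 hd2 hl]
    exact h2
  · have h2 := (hi3.comp_smul (R := l) hl.ne').const_mul (l ^ 6)
    have h : (fun x : Sp N => ‖(uscale l u).1 x‖ ^ 2 * ‖(uscale l u).2 x‖)
        = fun x => l ^ 6 * ((fun y => ‖u.1 y‖ ^ 2 * ‖u.2 y‖) (l • x)) := by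
      funext x
      simp only [uscale, norm_mul, norm_coeff hl, mul_pow]
      ring
    show Integrable (fun x : Sp N => ‖(uscale l u).1 x‖ ^ 2 * ‖(uscale l u).2 x‖) volume
    rw [h]
    exact h2

lemma nsq_nonneg (f : Sp N → ℂ) : 0 ≤ nsq f :=
  MeasureTheory.integral_nonneg fun x => by positivity

lemma gsq_nonneg (f : Sp N → ℂ) : 0 ≤ gsq f :=
  MeasureTheory.integral_nonneg fun x => by positivity

lemma Mom_sc (m₁ m₂ ω : ℝ) (u : (Sp N → ℂ) × (Sp N → ℂ)) {l : ℝ} (hl : 0 < l) :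
    Mom m₁ m₂ ω (uscale l u) = l ^ 4 * (l ^ N)⁻¹ * Mom m₁ m₂ ω u := by
  have e1 : (uscale l u).1 = fun x : Sp N => ((l : ℂ)) ^ 2 * u.1 (l • x) := rfl
  have e2 : (uscale l u).2 = fun x : Sp N => ((l : ℂ)) ^ 2 * u.2 (l • x) := rfl
  rw [Mom, Mom, e1, e2, nsq_sc u.1 hl, nsq_sc u.2 hl]
  ring

lemma gss_sc (u : (Sp N → ℂ) × (Sp N → ℂ)) (hd1 : Differentiable ℝ u.1)
    (hd2 : Differentiable ℝ u.2) {l : ℝ} (hl : 0 < l) :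
    gsq (uscale l u).1 + gsq (uscale l u).2 = l ^ 6 * (l ^ N)⁻¹ * (gsq u.1 + gsq u.2) := by
  have e1 : (uscale l u).1 = fun x : Sp N => ((l : ℂ)) ^ 2 * u.1 (l • x) := rfl
  have e2 : (uscale l u).2 = fun x : Sp N => ((l : ℂ)) ^ 2 * u.2 (l • x) := rfl
  rw [e1, e2, gsq_sc u.1 hd1 hl, gsq_sc u.2 hd2 hl]
  ring

lemma Lfun_sc (u : (Sp N → ℂ) × (Sp N → ℂ)) (hd1 : Differentiable ℝ u.1)
    (hd2 : Differentiable ℝ u.2) {l : ℝ} (hl : 0 < l) :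
    Lfun (uscale l u) = l ^ 6 * (l ^ N)⁻¹ * Lfun u := by
  have h1 := gss_sc u hd1 hd2 hl
  have h2 := G_sc u hl
  rw [Lfun, Lfun]
  linear_combination (-(1 / 2 : ℝ)) * h1 + h2

lemma Jineq {t Mv Lv : ℝ} (hN : N = 2 ∨ N = 3) (ht : 0 < t) (hLv : 0 < Lv)
    (hrel : (4 - (N : ℝ)) * Mv = ((4 - (N : ℝ)) + 2) * Lv) :
    t ^ 4 * (t ^ N)⁻¹ * Mv - t ^ 6 * (t ^ N)⁻¹ * Lv ≤ Mv - Lv := by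
  have ht' : t ≠ 0 := ht.ne'
  rcases hN with rfl | rfl
  · have hM : Mv = 2 * Lv := by push_cast at hrel; linarith
    have h2 : t ^ 4 * ((t : ℝ) ^ 2)⁻¹ = t ^ 2 := by field_simp
    have h3 : t ^ 6 * ((t : ℝ) ^ 2)⁻¹ = t ^ 4 := by field_simp
    rw [h2, h3, hM]
    nlinarith [sq_nonneg (t ^ 2 - 1), hLv.le, mul_nonneg (sq_nonneg (t ^ 2 - 1)) hLv.le]
  · have hM : Mv = 3 * Lv := by push_cast at hrel; linarith
    have h2 : t ^ 4 * ((t : ℝ) ^ 3)⁻¹ = t := by field_simp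
    have h3 : t ^ 6 * ((t : ℝ) ^ 3)⁻¹ = t ^ 3 := by field_simp
    rw [h2, h3, hM]
    nlinarith [mul_nonneg (mul_nonneg (sq_nonneg (t - 1)) (by linarith : (0:ℝ) ≤ t + 2)) hLv.le]

end Stmt7Aux

/-- If `P_ω(𝐮) < 0`, then `M_ω(𝛗_ω) < M_ω(𝐮)` and `L(𝛗_ω) < L(𝐮)`. -/
theorem stmt_7 {N : ℕ} (hN : N = 2 ∨ N = 3) (m₁ m₂ ω : ℝ)
    (hm₁ : 0 < m₁) (hm₂ : 0 < m₂) (hω : ω ^ 2 < min (m₁ ^ 2) (m₂ ^ 2 / 4))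
    (φ : (Sp N → ℂ) × (Sp N → ℂ)) (hφ : IsGroundState m₁ m₂ ω φ)
    (u : (Sp N → ℂ) × (Sp N → ℂ)) (hu : Admissible u)
    (hP : Pom m₁ m₂ ω u < 0) :
    Mom m₁ m₂ ω φ < Mom m₁ m₂ ω u ∧ Lfun φ < Lfun u := by
  obtain ⟨hφa, hφne, hφP, hφJ⟩ := hφ
  obtain ⟨hωm₁, hωm₂⟩ := lt_min_iff.mp hω
  have hc1 : 0 < (m₁ ^ 2 - ω ^ 2) / 2 := by linarith
  have hc2 : 0 < (m₂ ^ 2 - 4 * ω ^ 2) / 2 := by linarith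
  have hNlt4 : N < 4 := by rcases hN with rfl | rfl <;> norm_num
  have hNlt6 : N < 6 := by rcases hN with rfl | rfl <;> norm_num
  have hα : (0 : ℝ) < 4 - (N : ℝ) := by rcases hN with rfl | rfl <;> norm_num
  have hα2 : (0 : ℝ) < (4 - (N : ℝ)) + 2 := by linarith
  have hMnn : ∀ w : (Sp N → ℂ) × (Sp N → ℂ), 0 ≤ Mom m₁ m₂ ω w := fun w =>
    add_nonneg (mul_nonneg hc1.le (Stmt7Aux.nsq_nonneg _))
      (mul_nonneg hc2.le (Stmt7Aux.nsq_nonneg _))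
  have hA := hMnn u
  have hPu : (4 - (N : ℝ)) * Mom m₁ m₂ ω u < ((4 - (N : ℝ)) + 2) * Lfun u := by
    rw [Pom] at hP; linarith
  have hB : 0 < Lfun u := by
    by_contra hB
    push_neg at hB
    nlinarith [mul_nonneg hα.le hA, mul_nonneg hα2.le (neg_nonneg.2 hB)]
  have hgu1 := Stmt7Aux.gsq_nonneg u.1
  have hgu2 := Stmt7Aux.gsq_nonneg u.2
  have hLurfl : Lfun u = -(1/2) * (gsq u.1 + gsq u.2) + Gfun u := rfl
  have hGu : 0 < Gfun u := by linarith
  have hApos : 0 < Mom m₁ m₂ ω u := by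
    rcases hA.lt_or_eq with h | h
    · exact h
    · exfalso
      have hn1 : nsq u.1 = 0 := by
        by_contra hne
        have hpos : 0 < nsq u.1 := lt_of_le_of_ne (Stmt7Aux.nsq_nonneg u.1) (Ne.symm hne)
        rw [Mom] at h
        nlinarith [mul_pos hc1 hpos, mul_nonneg hc2.le (Stmt7Aux.nsq_nonneg u.2)]
      have hint : Integrable (fun x => ‖u.1 x‖ ^ 2) volume :=
        (memLp_two_iff_integrable_sq_norm hu.1.continuous.aestronglyMeasurable).1 hu.2.2.1
      rw [nsq] at hn1
      have hae := (MeasureTheory.integral_eq_zero_iff_of_nonneg_ae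
        (Filter.Eventually.of_forall (fun x => by
          simp only [Pi.zero_apply]; positivity)) hint).1 hn1
      have hae1 : u.1 =ᵐ[volume] 0 := by
        filter_upwards [hae] with x hx
        simp only [Pi.zero_apply] at hx ⊢
        exact norm_eq_zero.1 ((pow_eq_zero_iff (by norm_num : (2:ℕ) ≠ 0)).1 hx)
      have hG0 : Gfun u = 0 := by
        have hz : (fun x => (u.1 x) ^ 2 * (starRingEnd ℂ) (u.2 x)) =ᵐ[volume] 0 := by
          filter_upwards [hae1] with x hx
          simp only [Pi.zero_apply] at hx ⊢
          simp [hx]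
        rw [Gfun, MeasureTheory.integral_congr_ae hz]
        simp
      linarith
  -- the scaling parameter lam
  have hfrac : 0 < (4 - (N : ℝ)) * Mom m₁ m₂ ω u / (((4 - (N : ℝ)) + 2) * Lfun u) :=
    div_pos (mul_pos hα hApos) (mul_pos hα2 hB)
  obtain ⟨lam, hlam, hlamsq⟩ : ∃ lam : ℝ, 0 < lam ∧
      lam ^ 2 = (4 - (N : ℝ)) * Mom m₁ m₂ ω u / (((4 - (N : ℝ)) + 2) * Lfun u) :=
    ⟨_, Real.sqrt_pos.2 hfrac, Real.sq_sqrt hfrac.le⟩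
  have hkey : lam ^ 2 * (((4 - (N : ℝ)) + 2) * Lfun u) = (4 - (N : ℝ)) * Mom m₁ m₂ ω u := by
    rw [hlamsq]; field_simp
  have hlamsq1 : lam ^ 2 < 1 := by
    rw [hlamsq]; exact (div_lt_one (mul_pos hα2 hB)).2 hPu
  have hlam1 : lam < 1 := by
    by_contra hle
    push_neg at hle
    have h2 : (1:ℝ) * 1 ≤ lam * lam := mul_le_mul hle hle (by norm_num) (by linarith)
    have h3 : lam ^ 2 = lam * lam := sq lam
    linarith
  -- the pair v = uscale lam u
  have hva : Admissible (uscale lam u) := Stmt7Aux.adm_sc u hu hlam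
  have hMv : Mom m₁ m₂ ω (uscale lam u) = lam ^ 4 * (lam ^ N)⁻¹ * Mom m₁ m₂ ω u :=
    Stmt7Aux.Mom_sc m₁ m₂ ω u hlam
  have hLv : Lfun (uscale lam u) = lam ^ 6 * (lam ^ N)⁻¹ * Lfun u :=
    Stmt7Aux.Lfun_sc u hu.1 hu.2.1 hlam
  have hGv : Gfun (uscale lam u) = lam ^ 6 * ((lam ^ N)⁻¹ * Gfun u) := Stmt7Aux.G_sc u hlam
  have hlNpos : 0 < lam ^ N := pow_pos hlam N
  have hPv : (4 - (N : ℝ)) * Mom m₁ m₂ ω (uscale lam u)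
      = ((4 - (N : ℝ)) + 2) * Lfun (uscale lam u) := by
    rw [hMv, hLv]
    linear_combination (-(lam ^ 4 * (lam ^ N)⁻¹)) * hkey
  have hMvpos : 0 < Mom m₁ m₂ ω (uscale lam u) := by
    rw [hMv]; exact mul_pos (mul_pos (pow_pos hlam 4) (inv_pos.2 hlNpos)) hApos
  have hLvpos : 0 < Lfun (uscale lam u) := by
    rw [hLv]; exact mul_pos (mul_pos (pow_pos hlam 6) (inv_pos.2 hlNpos)) hB
  have hMvlt : Mom m₁ m₂ ω (uscale lam u) < Mom m₁ m₂ ω u := by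
    rw [hMv]
    have hp : lam ^ 4 < lam ^ N := pow_lt_pow_right_of_lt_one₀ hlam hlam1 hNlt4
    have hlt1 : lam ^ 4 * (lam ^ N)⁻¹ < 1 := by
      rw [← div_eq_mul_inv]; exact (div_lt_one hlNpos).2 hp
    calc lam ^ 4 * (lam ^ N)⁻¹ * Mom m₁ m₂ ω u < 1 * Mom m₁ m₂ ω u :=
          mul_lt_mul_of_pos_right hlt1 hApos
      _ = Mom m₁ m₂ ω u := one_mul _
  have hLvlt : Lfun (uscale lam u) < Lfun u := by
    rw [hLv]
    have hp : lam ^ 6 < lam ^ N := pow_lt_pow_right_of_lt_one₀ hlam hlam1 hNlt6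
    have hlt1 : lam ^ 6 * (lam ^ N)⁻¹ < 1 := by
      rw [← div_eq_mul_inv]; exact (div_lt_one hlNpos).2 hp
    calc lam ^ 6 * (lam ^ N)⁻¹ * Lfun u < 1 * Lfun u :=
          mul_lt_mul_of_pos_right hlt1 hB
      _ = Lfun u := one_mul _
  -- positivity of G and of 3G - g for v
  have hgv1 := Stmt7Aux.gsq_nonneg (uscale lam u).1
  have hgv2 := Stmt7Aux.gsq_nonneg (uscale lam u).2
  have hLvrfl : Lfun (uscale lam u)
      = -(1/2) * (gsq (uscale lam u).1 + gsq (uscale lam u).2) + Gfun (uscale lam u) := rfl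
  have hGvpos : 0 < Gfun (uscale lam u) := by linarith
  have h3G : 0 < 3 * Gfun (uscale lam u)
      - (gsq (uscale lam u).1 + gsq (uscale lam u).2) := by linarith
  -- the second scaling parameter tt
  have hfr2 : 0 < 2 * Mom m₁ m₂ ω (uscale lam u)
      / (3 * Gfun (uscale lam u) - (gsq (uscale lam u).1 + gsq (uscale lam u).2)) :=
    div_pos (by linarith) h3G
  obtain ⟨tt, ht, httsq⟩ : ∃ tt : ℝ, 0 < tt ∧ tt ^ 2 = 2 * Mom m₁ m₂ ω (uscale lam u)
      / (3 * Gfun (uscale lam u) - (gsq (uscale lam u).1 + gsq (uscale lam u).2)) :=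
    ⟨_, Real.sqrt_pos.2 hfr2, Real.sq_sqrt hfr2.le⟩
  have hkey2 : tt ^ 2 * (3 * Gfun (uscale lam u)
      - (gsq (uscale lam u).1 + gsq (uscale lam u).2)) = 2 * Mom m₁ m₂ ω (uscale lam u) := by
    rw [httsq]; field_simp
  -- the pair w = uscale tt v
  have hwa : Admissible (uscale tt (uscale lam u)) := Stmt7Aux.adm_sc _ hva ht
  have hMw : Mom m₁ m₂ ω (uscale tt (uscale lam u))
      = tt ^ 4 * (tt ^ N)⁻¹ * Mom m₁ m₂ ω (uscale lam u) :=
    Stmt7Aux.Mom_sc m₁ m₂ ω (uscale lam u) ht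
  have hLw : Lfun (uscale tt (uscale lam u))
      = tt ^ 6 * (tt ^ N)⁻¹ * Lfun (uscale lam u) :=
    Stmt7Aux.Lfun_sc (uscale lam u) hva.1 hva.2.1 ht
  have hGw : Gfun (uscale tt (uscale lam u))
      = tt ^ 6 * ((tt ^ N)⁻¹ * Gfun (uscale lam u)) := Stmt7Aux.G_sc (uscale lam u) ht
  have hgssw := Stmt7Aux.gss_sc (uscale lam u) hva.1 hva.2.1 ht
  have hKw : Kom m₁ m₂ ω (uscale tt (uscale lam u)) = 0 := by
    rw [Kom]
    linear_combination 2 * hMw + hgssw - 3 * hGw - (tt ^ 4 * (tt ^ N)⁻¹) * hkey2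
  have hGwpos : 0 < Gfun (uscale tt (uscale lam u)) := by
    rw [hGw]; exact mul_pos (pow_pos ht 6) (mul_pos (inv_pos.2 (pow_pos ht N)) hGvpos)
  have hwne : uscale tt (uscale lam u) ≠ 0 := by
    intro h0
    rw [h0] at hGwpos
    have hz : Gfun (0 : (Sp N → ℂ) × (Sp N → ℂ)) = 0 := by simp [Gfun]
    linarith
  -- the infimum bound
  have hbdd : ∀ r ∈ {r : ℝ | ∃ w : (Sp N → ℂ) × (Sp N → ℂ),
      Admissible w ∧ w ≠ 0 ∧ Kom m₁ m₂ ω w = 0 ∧ r = Jom m₁ m₂ ω w}, (0:ℝ) ≤ r := by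
    rintro r ⟨w', hw'a, -, hK', rfl⟩
    have hM' := hMnn w'
    have hg1 := Stmt7Aux.gsq_nonneg w'.1
    have hg2 := Stmt7Aux.gsq_nonneg w'.2
    rw [Kom] at hK'
    rw [Jom, Lfun]
    linarith
  have hJφw : Jom m₁ m₂ ω φ ≤ Jom m₁ m₂ ω (uscale tt (uscale lam u)) := by
    rw [hφJ]
    exact csInf_le ⟨0, hbdd⟩ ⟨_, hwa, hwne, hKw, rfl⟩
  have hJwv : Jom m₁ m₂ ω (uscale tt (uscale lam u)) ≤ Jom m₁ m₂ ω (uscale lam u) := by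
    rw [Jom, Jom, hMw, hLw]
    exact Stmt7Aux.Jineq hN ht hLvpos hPv
  have hJφv : Jom m₁ m₂ ω φ ≤ Jom m₁ m₂ ω (uscale lam u) := le_trans hJφw hJwv
  have hPφ : (4 - (N : ℝ)) * Mom m₁ m₂ ω φ = ((4 - (N : ℝ)) + 2) * Lfun φ := by
    rw [Pom] at hφP; linarith
  rw [Jom, Jom] at hJφv
  clear hφJ hbdd hJφw hJwv hKw hGwpos hwne hwa hMw hLw hGw hgssw hkey2 httsq
  set n : ℝ := (N : ℝ) with hn
  set x1 : ℝ := Mom m₁ m₂ ω φ with hx1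
  set x2 : ℝ := Lfun φ with hx2
  set x3 : ℝ := Mom m₁ m₂ ω (uscale lam u) with hx3
  set x4 : ℝ := Lfun (uscale lam u) with hx4
  set x5 : ℝ := Mom m₁ m₂ ω u with hx5
  set x6 : ℝ := Lfun u with hx6
  constructor
  · have h1 : ((4 - n) + 2) * (x1 - x2) ≤ ((4 - n) + 2) * (x3 - x4) :=
      mul_le_mul_of_nonneg_left hJφv hα2.le
    linarith only [h1, hPφ, hPv, hMvlt]
  · have h1 : (4 - n) * (x1 - x2) ≤ (4 - n) * (x3 - x4) :=
      mul_le_mul_of_nonneg_left hJφv hα.le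
    linarith only [h1, hPφ, hPv, hLvlt]

end
end
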